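/- For every N ≥ 1 and every unit vector ψ in ℂ^N, the fidelity-based coherence measure C_f(ψ) vanishes if and only if ψ is a computational basis state up to a global phase, i.e., ψ = c·|i⟩ for some index i and some complex number c with |c| = 1. Moreover 0 ≤ C_f(ψ) ≤ 1 for every unit vector ψ. -/

import Mathlib

open scoped BigOperators Kronecker ComplexOrder Matrix

namespace SKW

noncomputable section

/-- Bit strings of length `n`: vertices of the `n`-dimensional hypercube /
    computational basis labels of `n` qubits. -/
abbrev BV (n : ℕ) := Fin n → Bool

/-- Inner product `⟨v|w⟩`, conjugate-linear in the first argument. -/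
def ip {α : Type*} [Fintype α] (v w : α → ℂ) : ℂ :=
  ∑ i, (starRingEnd ℂ) (v i) * w i

/-- Squared `ℓ²`-norm of a vector of amplitudes. -/
def normSq {α : Type*} [Fintype α] (v : α → ℂ) : ℝ :=
  ∑ i, ‖v i‖ ^ 2

/-- Flip the `d`-th bit of `x` (i.e. `x ⊕ e_d`). -/
def flipBit {n : ℕ} (x : BV n) (d : Fin n) : BV n := Function.update x d (!x d)

/-- The shift operator `S = Σ_{d,x} |d, x ⊕ e_d⟩⟨d, x|` on `ℂ^n ⊗ ℂ^N`. -/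
def shift (n : ℕ) : Matrix (Fin n × BV n) (Fin n × BV n) ℂ :=
  Matrix.of fun p q => if p.1 = q.1 ∧ p.2 = flipBit q.2 q.1 then 1 else 0

/-- The coin-space equal superposition `|S^c⟩ = (1/√n) Σ_d |d⟩`. -/
def sc (n : ℕ) : Fin n → ℂ := fun _ => ((1 / Real.sqrt n : ℝ) : ℂ)

/-- The node-space equal superposition `|η⟩ = (1/√N) Σ_x |x⟩`, `N = 2^n`. -/
def eta (n : ℕ) : BV n → ℂ := fun _ => ((1 / Real.sqrt ((2 : ℝ) ^ n) : ℝ) : ℂ)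

/-- Grover coin `G = 2|S^c⟩⟨S^c| − I`. -/
def grover (n : ℕ) : Matrix (Fin n) (Fin n) ℂ :=
  (2 : ℂ) • Matrix.vecMulVec (sc n) (fun d => (starRingEnd ℂ) (sc n d)) - 1

/-- Rank-one projector `|a⟩⟨a|` onto a basis vector. -/
def projV {α : Type*} [Fintype α] [DecidableEq α] (a : α) : Matrix α α ℂ :=
  Matrix.of fun x y => if x = a ∧ y = a then 1 else 0

/-- Perturbed coin `C = G ⊗ I + (−I − G) ⊗ |x_tg⟩⟨x_tg|`. -/
def coin (n : ℕ) (t : BV n) : Matrix (Fin n × BV n) (Fin n × BV n) ℂ :=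
  grover n ⊗ₖ (1 : Matrix (BV n) (BV n) ℂ) +
    (-(1 : Matrix (Fin n) (Fin n) ℂ) - grover n) ⊗ₖ projV t

/-- Perturbed evolution operator `V = S·C`. -/
def walkOp (n : ℕ) (t : BV n) : Matrix (Fin n × BV n) (Fin n × BV n) ℂ :=
  shift n * coin n t

/-- Number of iterations `τ = ⌊(π/2)√(2^{n−1})⌋`. -/
def tau (n : ℕ) : ℕ := ⌊(Real.pi / 2) * Real.sqrt ((2 : ℝ) ^ (n - 1))⌋₊

/-- Tensor product of a coin vector with a node vector. -/
def tensorCN {n : ℕ} (c : Fin n → ℂ) (v : BV n → ℂ) : Fin n × BV n → ℂ :=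
  fun p => c p.1 * v p.2

/-- Computational basis vector `|a⟩`. -/
def basisVec {α : Type*} [DecidableEq α] (a : α) : α → ℂ :=
  fun x => if x = a then 1 else 0

/-- Target state `|Γ⟩ = |S^c⟩ ⊗ |x_tg⟩`. -/
def gammaSt (n : ℕ) (t : BV n) : Fin n × BV n → ℂ :=
  tensorCN (sc n) (basisVec t)

/-- Average success probability of the SKW-1 algorithm on initial node state `ψ`. -/
def P1 (n : ℕ) (ψ : BV n → ℂ) : ℝ :=
  (1 / (2 : ℝ) ^ n) * ∑ t : BV n,
    ‖ip (gammaSt n t) ((walkOp n t ^ tau n).mulVec (tensorCN (sc n) ψ))‖ ^ 2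

/-- Coherence fraction `f_c(ψ) = |⟨η|ψ⟩|²`. -/
def fc (n : ℕ) (ψ : BV n → ℂ) : ℝ := ‖ip (eta n) ψ‖ ^ 2

/-- Kronecker product of `n` single-qubit matrices, as a matrix on `(ℂ²)^⊗n`. -/
def kronN {n : ℕ} (U : Fin n → Matrix Bool Bool ℂ) : Matrix (BV n) (BV n) ℂ :=
  Matrix.of fun x y => ∏ j, U j (x j) (y j)

/-- Tensor product of `n` single-qubit vectors. -/
def tensorVec {n : ℕ} (u : Fin n → Bool → ℂ) : BV n → ℂ :=
  fun x => ∏ j, u j (x j)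

/-- Density matrix: positive semidefinite with trace one. -/
def IsDensity {α : Type*} [Fintype α] [DecidableEq α] (ρ : Matrix α α ℂ) : Prop :=
  ρ.PosSemidef ∧ ρ.trace = 1

/-- Separable state: finite convex combination of tensor products of
single-qubit density matrices. -/
def IsSep {n : ℕ} (σ : Matrix (BV n) (BV n) ℂ) : Prop :=
  ∃ (m : ℕ) (p : Fin m → ℝ) (ρ : Fin m → Fin n → Matrix Bool Bool ℂ),
    (∀ i, 0 ≤ p i) ∧ ∑ i, p i = 1 ∧ (∀ i j, IsDensity (ρ i j)) ∧
      σ = ∑ i, (p i : ℂ) • kronN (ρ i)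

/-- Fidelity `⟨ψ|ρ|ψ⟩` between a pure state and a density matrix. -/
def fid {α : Type*} [Fintype α] (ψ : α → ℂ) (ρ : Matrix α α ℂ) : ℝ :=
  (ip ψ (ρ.mulVec ψ)).re

/-- Groverian entanglement measure `E_g(ψ) = min_{σ separable} √(1 − ⟨ψ|σ|ψ⟩)`. -/
def Eg {n : ℕ} (ψ : BV n → ℂ) : ℝ :=
  sInf {r : ℝ | ∃ σ, IsSep σ ∧ r = Real.sqrt (1 - fid ψ σ)}

/-- Incoherent state: density matrix diagonal in the computational basis. -/
def IsIncoherent {α : Type*} [Fintype α] [DecidableEq α] (δ : Matrix α α ℂ) : Prop :=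
  IsDensity δ ∧ ∀ x y, x ≠ y → δ x y = 0

/-- Fidelity-based coherence measure `C_f(ψ) = min_{δ incoherent} √(1 − ⟨ψ|δ|ψ⟩)`. -/
def Cf {α : Type*} [Fintype α] [DecidableEq α] (ψ : α → ℂ) : ℝ :=
  sInf {r : ℝ | ∃ δ, IsIncoherent δ ∧ r = Real.sqrt (1 - fid ψ δ)}

/-- Pauli X. -/
def PX : Matrix Bool Bool ℂ := Matrix.of fun a b => if a = b then 0 else 1

/-- Pauli Y. -/
def PY : Matrix Bool Bool ℂ :=
  Matrix.of fun a b => if a = b then 0 else if a then Complex.I else -Complex.I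

/-- Pauli Z. -/
def PZ : Matrix Bool Bool ℂ :=
  Matrix.of fun a b => if a = b then (if a then -1 else 1) else 0

/-- The 2×2 Hadamard matrix. -/
def Had : Matrix Bool Bool ℂ :=
  Matrix.of fun a b => ((1 / Real.sqrt 2 : ℝ) : ℂ) * (if a && b then -1 else 1)

/-- `H^{⊗n}`. -/
def HadN (n : ℕ) : Matrix (BV n) (BV n) ℂ := kronN fun _ => Had

/-- Membership in `{X, Y, Z}`. -/
def IsPauliXYZ (V : Matrix Bool Bool ℂ) : Prop := V = PX ∨ V = PY ∨ V = PZ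

/-- Maximal average success probability of SKW-2: optimize over a layer of
single-qubit unitaries applied to the node register. -/
def P2 (n : ℕ) (ψ : BV n → ℂ) : ℝ :=
  sSup {r : ℝ | ∃ U : Fin n → Matrix Bool Bool ℂ,
    (∀ j, U j ∈ Matrix.unitaryGroup Bool ℂ) ∧ r = P1 n ((kronN U).mulVec ψ)}

/-- Maximal average success probability of SKW-3: a layer of Pauli gates from
`{X,Y,Z}` followed by `H^{⊗n}`. -/
def P3 (n : ℕ) (ψ : BV n → ℂ) : ℝ :=
  sSup {r : ℝ | ∃ V : Fin n → Matrix Bool Bool ℂ,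
    (∀ j, IsPauliXYZ (V j)) ∧ r = P1 n ((HadN n * kronN V).mulVec ψ)}

/-- Even Hamming-weight predicate. -/
def evenPar {m : ℕ} (x : BV m) : Prop :=
  Even (Finset.univ.filter (fun j => x j = true)).card

instance {m : ℕ} (x : BV m) : Decidable (evenPar x) := by
  unfold evenPar; infer_instance

/-- Equal superposition over even-parity vertices. -/
def etaE (m : ℕ) : BV m → ℂ :=
  fun x => if evenPar x then ((1 / Real.sqrt ((2 : ℝ) ^ m / 2) : ℝ) : ℂ) else 0

/-- Projection onto even-parity vertices. -/
def projE {m : ℕ} (ψ : BV m → ℂ) : BV m → ℂ :=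
  fun x => if evenPar x then ψ x else 0

/-- Optimized perturbed evolution `V_opt = S(G ⊗ I)S·C`. -/
def walkOptOp (m : ℕ) (t : BV m) : Matrix (Fin m × BV m) (Fin m × BV m) ℂ :=
  shift m * (grover m ⊗ₖ (1 : Matrix (BV m) (BV m) ℂ)) * shift m * coin m t

/-- `τ_opt = ⌊(π/(2√2))√N⌋`. -/
def tauOpt (m : ℕ) : ℕ :=
  ⌊(Real.pi / (2 * Real.sqrt 2)) * Real.sqrt ((2 : ℝ) ^ m)⌋₊

/-- Average success probability of the optimized OSKW-1 algorithm. -/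
def P1opt (m : ℕ) (ψ : BV m → ℂ) : ℝ :=
  (1 / ((2 : ℝ) ^ m / 2)) * ∑ t ∈ Finset.univ.filter (fun t : BV m => evenPar t),
    ‖ip (gammaSt m t)
      ((walkOptOp m t ^ tauOpt m).mulVec (tensorCN (sc m) (projE ψ)))‖ ^ 2

/-- Coherence fraction with respect to the even-parity equal superposition. -/
def fcE (m : ℕ) (ψ : BV m → ℂ) : ℝ := ‖ip (etaE m) ψ‖ ^ 2

/-- Parity bit of a bit string. -/
def parityBit {n : ℕ} (x : BV n) : Bool :=
  Nat.bodd (Finset.univ.filter (fun j => x j = true)).card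

/-- Embed an `n`-qubit node state into the even-parity subspace of the
`(n+1)`-dimensional hypercube by appending a parity bit. -/
def embedEven {n : ℕ} (ψ : BV n → ℂ) : BV (n + 1) → ℂ :=
  fun x =>
    if x (Fin.last n) = parityBit (fun j : Fin n => x j.castSucc)
    then ψ (fun j : Fin n => x j.castSucc) else 0

/-- Maximal average success probability of OSKW-2. -/
def P2opt (n : ℕ) (ψ : BV n → ℂ) : ℝ :=
  sSup {r : ℝ | ∃ U : Fin n → Matrix Bool Bool ℂ,
    (∀ j, U j ∈ Matrix.unitaryGroup Bool ℂ) ∧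
      r = P1opt (n + 1) (embedEven ((kronN U).mulVec ψ))}

/-- Maximal average success probability of OSKW-3. -/
def P3opt (n : ℕ) (ψ : BV n → ℂ) : ℝ :=
  sSup {r : ℝ | ∃ V : Fin n → Matrix Bool Bool ℂ,
    (∀ j, IsPauliXYZ (V j)) ∧
      r = P1opt (n + 1) (embedEven ((HadN n * kronN V).mulVec ψ))}

/-- Input density matrix `ρ_in = |S^c⟩⟨S^c| ⊗ ρ`. -/
def rhoIn (n : ℕ) (ρ : Matrix (BV n) (BV n) ℂ) :
    Matrix (Fin n × BV n) (Fin n × BV n) ℂ :=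
  Matrix.vecMulVec (sc n) (fun d => (starRingEnd ℂ) (sc n d)) ⊗ₖ ρ

/-- Average success probability of SKW-1 with a mixed initial node state. -/
def P1mix (n : ℕ) (ρ : Matrix (BV n) (BV n) ℂ) : ℝ :=
  (1 / (2 : ℝ) ^ n) * ∑ t : BV n,
    ((walkOp n t ^ tau n * rhoIn n ρ * (walkOp n t ^ tau n).conjTranspose *
      Matrix.vecMulVec (gammaSt n t) (fun p => (starRingEnd ℂ) (gammaSt n t p))).trace).re

/-- Coherence fraction `f_c(ρ) = ⟨η|ρ|η⟩` of a mixed state. -/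
def fcMix (n : ℕ) (ρ : Matrix (BV n) (BV n) ℂ) : ℝ := fid (eta n) ρ

/-- The all-zeros basis state `|0ⁿ⟩`. -/
def zeroVec (n : ℕ) : BV n → ℂ := basisVec (fun _ => false)

/-- The single-qubit state `|+⟩`. -/
def plusVec : Bool → ℂ := fun _ => ((1 / Real.sqrt 2 : ℝ) : ℂ)

/-- Product (unentangled) pure state. -/
def IsProductVec {n : ℕ} (ψ : BV n → ℂ) : Prop :=
  ∃ u : Fin n → Bool → ℂ, (∀ j, normSq (u j) = 1) ∧ ψ = tensorVec u

/-! Against an incoherent state `δ` with diagonal `p`, the fidelity of `ψ` is the average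
`∑ pᵢ |ψᵢ|²`, so it is maximised by the basis projector at a largest amplitude `ψ_{i₀}`:
`C_f(ψ) = √(1 - max_i |ψᵢ|²)`. For a unit vector this vanishes exactly when one amplitude
carries the whole norm. -/

section Incoherent

variable {α : Type*} [Fintype α] [DecidableEq α] {δ : Matrix α α ℂ}

lemma IsIncoherent.mulVec_apply (hδ : IsIncoherent δ) (ψ : α → ℂ) (i : α) :
    (δ *ᵥ ψ) i = δ i i * ψ i :=
  Finset.sum_eq_single i (fun j _ hji => by simp [hδ.2 i j hji.symm])
    (absurd (Finset.mem_univ i))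

lemma IsIncoherent.re_diag_nonneg (hδ : IsIncoherent δ) (i : α) : 0 ≤ (δ i i).re :=
  (Complex.nonneg_iff.mp hδ.1.1.diag_nonneg).1

lemma IsIncoherent.sum_re_diag (hδ : IsIncoherent δ) : ∑ i, (δ i i).re = 1 := by
  simpa [Matrix.trace, Complex.re_sum] using congrArg Complex.re hδ.1.2

lemma fid_of_isIncoherent (ψ : α → ℂ) (hδ : IsIncoherent δ) :
    fid ψ δ = ∑ i, (δ i i).re * ‖ψ i‖ ^ 2 := by
  simp only [fid, ip, hδ.mulVec_apply, Complex.re_sum]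
  refine Finset.sum_congr rfl fun i _ => ?_
  rw [mul_left_comm, Complex.conj_mul', ← Complex.ofReal_pow, Complex.re_mul_ofReal]

lemma fid_le_of_isIncoherent {ψ : α → ℂ} {M : ℝ} (hδ : IsIncoherent δ)
    (hM : ∀ i, ‖ψ i‖ ^ 2 ≤ M) : fid ψ δ ≤ M :=
  calc fid ψ δ = ∑ i, (δ i i).re * ‖ψ i‖ ^ 2 := fid_of_isIncoherent ψ hδ
    _ ≤ ∑ i, (δ i i).re * M :=
      Finset.sum_le_sum fun i _ => mul_le_mul_of_nonneg_left (hM i) (hδ.re_diag_nonneg i)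
    _ = M := by rw [← Finset.sum_mul, hδ.sum_re_diag, one_mul]

lemma projV_eq_diagonal (a : α) : projV a = Matrix.diagonal (basisVec a) := by
  ext x y
  simp only [projV, Matrix.of_apply, Matrix.diagonal_apply, basisVec]
  grind

lemma isIncoherent_projV (a : α) : IsIncoherent (projV a) := by
  rw [projV_eq_diagonal]
  refine ⟨⟨Matrix.PosSemidef.diagonal fun x => ?_, ?_⟩, fun _ _ => Matrix.diagonal_apply_ne _⟩
  · unfold basisVec
    split_ifs <;> simp
  · simp [Matrix.trace_diagonal, basisVec]

lemma fid_projV (ψ : α → ℂ) (a : α) : fid ψ (projV a) = ‖ψ a‖ ^ 2 := by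
  rw [fid_of_isIncoherent ψ (isIncoherent_projV a)]
  simp [projV, apply_ite Complex.re]

lemma Cf_eq_sqrt_of_forall_norm_le (ψ : α → ℂ) (i₀ : α) (hi₀ : ∀ i, ‖ψ i‖ ≤ ‖ψ i₀‖) :
    Cf ψ = √(1 - ‖ψ i₀‖ ^ 2) := by
  refine IsLeast.csInf_eq ⟨⟨projV i₀, isIncoherent_projV i₀, by rw [fid_projV]⟩, ?_⟩
  rintro _ ⟨δ, hδ, rfl⟩
  have hfid := fid_le_of_isIncoherent (ψ := ψ) hδ fun i =>
    pow_le_pow_left₀ (norm_nonneg _) (hi₀ i) 2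
  exact Real.sqrt_le_sqrt (by linarith)

end Incoherent

section NormSq

variable {α : Type*} [Fintype α]

lemma sq_norm_le_normSq (ψ : α → ℂ) (i : α) : ‖ψ i‖ ^ 2 ≤ normSq ψ :=
  Finset.single_le_sum (f := fun j => ‖ψ j‖ ^ 2) (fun _ _ => sq_nonneg _) (Finset.mem_univ i)

lemma eq_smul_basisVec_of_normSq_le [DecidableEq α] {ψ : α → ℂ} {i : α}
    (h : normSq ψ ≤ ‖ψ i‖ ^ 2) : ψ = ψ i • basisVec i := by
  funext j
  by_cases hji : j = i
  · simp [basisVec, hji]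
  · have hpair : ‖ψ i‖ ^ 2 + ‖ψ j‖ ^ 2 ≤ normSq ψ := by
      rw [← Finset.sum_pair (f := fun k => ‖ψ k‖ ^ 2) (Ne.symm hji)]
      exact Finset.sum_le_sum_of_subset_of_nonneg (Finset.subset_univ _)
        fun _ _ _ => sq_nonneg _
    have hj : ‖ψ j‖ ^ 2 = 0 := le_antisymm (by linarith) (sq_nonneg _)
    simp [basisVec, hji, norm_eq_zero.mp (pow_eq_zero_iff two_ne_zero |>.mp hj)]

end NormSq

/-- The fidelity-based coherence of a unit vector vanishes iff the vector is a
computational basis state up to a global phase, and it always lies in `[0,1]`. -/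
theorem coherence_zero_iff_basis :
    ∀ N : ℕ, 1 ≤ N → ∀ ψ : Fin N → ℂ, normSq ψ = 1 →
      (Cf ψ = 0 ↔ ∃ (i : Fin N) (c : ℂ), ‖c‖ = 1 ∧ ψ = c • basisVec i) ∧
      0 ≤ Cf ψ ∧ Cf ψ ≤ 1 := by
  intro N hN ψ hψ
  have : Nonempty (Fin N) := ⟨⟨0, hN⟩⟩
  obtain ⟨i₀, hi₀⟩ := Finite.exists_max fun i => ‖ψ i‖
  have hmax_le : ‖ψ i₀‖ ^ 2 ≤ 1 := hψ ▸ sq_norm_le_normSq ψ i₀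
  rw [Cf_eq_sqrt_of_forall_norm_le ψ i₀ hi₀]
  refine ⟨?_, Real.sqrt_nonneg _, Real.sqrt_le_one.mpr (by linarith [sq_nonneg ‖ψ i₀‖])⟩
  rw [Real.sqrt_eq_zero', sub_nonpos]
  constructor
  · intro h
    have hnorm : ‖ψ i₀‖ ^ 2 = 1 := le_antisymm hmax_le h
    exact ⟨i₀, ψ i₀, (pow_eq_one_iff_of_nonneg (norm_nonneg _) two_ne_zero).mp hnorm,
      eq_smul_basisVec_of_normSq_le (hψ ▸ hnorm.ge)⟩
  · rintro ⟨i, c, hc, rfl⟩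
    calc (1 : ℝ) = ‖(c • basisVec i) i‖ ^ 2 := by simp [basisVec, hc]
      _ ≤ ‖(c • basisVec i) i₀‖ ^ 2 := by gcongr; exact hi₀ i

end

end SKW
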